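/- arXiv:1808.06877 — 4 statements merged into one kernel-verified Lean document; each statement's English description precedes it below -/
import Mathlib

section
/- For every ε ∈ (0,1), α ∈ [0,1), and β ≥ 1, sup_{t>0} ∫_0^t (ت/s)^{1−ε} e^{−β(t−s)} (t−s)^{−α} ds ≤ (2Γ(1−α)+1) / ((1−α) ε β^{1−α}), where Γ is the Gamma function. (Here the integrand has t/s raised to the power 1−ε.) -/
/-!
Split the integrand at `s = t/2`. For `s ≤ t/2` the kernel `e^{-βu} u^{-α}` at `u = t - s` is
at most its value at `u = t/2`, and `∫₀ᵗ (t/s)^{1-ε} ds = t/ε`; this produces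
`2 (t/2)^{1-α} e^{-βt/2} / ε`, which is controlled by `c x^c e^{-x} ≤ e⁻¹ < 1/2` for
`c = 1 - α ∈ (0, 1]`. For `s ≥ t/2` the weight `(t/s)^{1-ε}` is at most `2`, and the kernel
integrates over `(0, ∞)` to `Γ(1-α) / β^{1-α}`.
-/

open Real intervalIntegral MeasureTheory Set

noncomputable def expKernel (β α u : ℝ) : ℝ := exp (-β * u) / u ^ α

section expKernel

variable {α β : ℝ}

lemma expKernel_nonneg {u : ℝ} (hu : 0 ≤ u) : 0 ≤ expKernel β α u := by
  unfold expKernel; positivity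

lemma expKernel_le_of_le (hα : 0 ≤ α) (hβ : 0 ≤ β) {u v : ℝ} (hu : 0 < u) (huv : u ≤ v) :
    expKernel β α v ≤ expKernel β α u :=
  div_le_div₀ (exp_pos _).le (exp_le_exp.2 (by nlinarith)) (rpow_pos_of_pos hu _)
    (rpow_le_rpow hu.le huv hα)

lemma expKernel_eq_rpow_mul_exp {u : ℝ} (hu : 0 < u) :
    expKernel β α u = u ^ ((1 - α) - 1) * exp (-(β * u)) := by
  rw [expKernel, sub_sub_cancel_left, rpow_neg hu.le, neg_mul]
  ring

lemma integrableOn_expKernel (hα : α < 1) (hβ : 0 < β) :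
    IntegrableOn (expKernel β α) (Ioi 0) := by
  refine (integrableOn_rpow_mul_exp_neg_mul_rpow (s := -α) (by linarith) one_pos hβ).congr_fun
    (fun u (hu : 0 < u) => ?_) measurableSet_Ioi
  simp only [expKernel_eq_rpow_mul_exp hu, rpow_one, sub_sub_cancel_left, neg_mul]

lemma integral_expKernel_le (hα : α < 1) (hβ : 0 < β) {T : ℝ} (hT : 0 ≤ T) :
    ∫ u in 0..T, expKernel β α u ≤ Gamma (1 - α) / β ^ (1 - α) := by
  calc ∫ u in 0..T, expKernel β α u
      ≤ ∫ u in Ioi 0, expKernel β α u := by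
        rw [integral_of_le hT]
        exact setIntegral_mono_set (integrableOn_expKernel hα hβ)
          (ae_restrict_of_forall_mem measurableSet_Ioi fun u hu => expKernel_nonneg (le_of_lt hu))
          Ioc_subset_Ioi_self.eventuallyLE
    _ = (1 / β) ^ (1 - α) * Gamma (1 - α) := by
        rw [setIntegral_congr_fun measurableSet_Ioi fun u hu => expKernel_eq_rpow_mul_exp hu]
        exact integral_rpow_mul_exp_neg_mul_Ioi (by linarith) hβ
    _ = Gamma (1 - α) / β ^ (1 - α) := by
        rw [one_div, inv_rpow hβ.le]; ring

end expKernel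

lemma mul_rpow_mul_exp_neg_le {c x : ℝ} (hc0 : 0 < c) (hc1 : c ≤ 1) (hx : 0 ≤ x) :
    c * x ^ c * exp (-x) ≤ exp (-1) := by
  rcases hx.eq_or_lt with rfl | hx
  · rw [zero_rpow hc0.ne', mul_zero, zero_mul]; positivity
  -- `c log x ≤ x - c + c log c` (from `log (x/c) ≤ x/c - 1`) and `(1 + c) log c ≤ log c ≤ c - 1`
  have hxc : log (x / c) ≤ x / c - 1 := log_le_sub_one_of_pos (by positivity)
  have hc : log c ≤ c - 1 := log_le_sub_one_of_pos hc0
  have hc' : c * log c ≤ 0 := mul_nonpos_of_nonneg_of_nonpos hc0.le (log_nonpos hc0.le hc1)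
  rw [log_div hx.ne' hc0.ne', sub_le_iff_le_add] at hxc
  have hmul := mul_le_mul_of_nonneg_left hxc hc0.le
  rw [mul_add, mul_sub, mul_div_cancel₀ x hc0.ne'] at hmul
  rw [rpow_def_of_pos hx, ← exp_log hc0, ← exp_add, ← exp_add, exp_le_exp, exp_log hc0]
  nlinarith

lemma mul_expKernel_half_le {α β t : ℝ} (hα0 : 0 ≤ α) (hα1 : α < 1) (hβ : 0 < β) (ht : 0 < t) :
    t * expKernel β α (t / 2) ≤ 1 / ((1 - α) * β ^ (1 - α)) := by
  have hc : 0 < 1 - α := by linarith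
  have ht2 : 0 < t / 2 := by positivity
  have hpeak := mul_rpow_mul_exp_neg_le hc (by linarith) (mul_pos hβ ht2).le
  rw [mul_rpow hβ.le ht2.le, rpow_sub ht2, rpow_one] at hpeak
  rw [le_div_iff₀ (by positivity), expKernel]
  calc t * (exp (-β * (t / 2)) / (t / 2) ^ α) * ((1 - α) * β ^ (1 - α))
      = 2 * ((1 - α) * (β ^ (1 - α) * (t / 2 / (t / 2) ^ α)) * exp (-(β * (t / 2)))) := by
        field_simp
    _ ≤ 2 * exp (-1) := by gcongr
    _ ≤ 1 := by linarith [exp_neg_one_lt_half]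

section divRpow

variable {p t : ℝ}

lemma div_rpow_eq_mul_rpow_neg (ht : 0 ≤ t) {s : ℝ} (hs : 0 ≤ s) :
    (t / s) ^ p = t ^ p * s ^ (-p) := by
  rw [div_rpow ht hs, rpow_neg hs, div_eq_mul_inv]

lemma intervalIntegrable_div_rpow (hp : p < 1) (ht : 0 ≤ t) :
    IntervalIntegrable (fun s => (t / s) ^ p) volume 0 t := by
  exact ((intervalIntegral.intervalIntegrable_rpow' (r := -p) (by linarith)).const_mul
    (t ^ p)).congr fun s hs => (div_rpow_eq_mul_rpow_neg ht (uIoc_of_le ht ▸ hs).1.le).symm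

lemma integral_div_rpow (hp : p < 1) (ht : 0 < t) :
    ∫ s in 0..t, (t / s) ^ p = t / (1 - p) := by
  rw [integral_congr fun s hs => div_rpow_eq_mul_rpow_neg ht.le (uIcc_of_le ht.le ▸ hs).1,
    intervalIntegral.integral_const_mul, integral_rpow (Or.inl (by linarith)),
    zero_rpow (by linarith), sub_zero, mul_div_assoc', ← rpow_add ht, add_neg_cancel_left, rpow_one, neg_add_eq_sub]

end divRpow

lemma integral_le_of_nonneg_of_le_on_Ioo {f g : ℝ → ℝ} {a b : ℝ} (hab : a ≤ b)
    (hg : IntervalIntegrable g volume a b) (hf : ∀ x ∈ Ioo a b, 0 ≤ f x)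
    (hfg : ∀ x ∈ Ioo a b, f x ≤ g x) :
    ∫ x in a..b, f x ≤ ∫ x in a..b, g x := by
  simp only [integral_of_le hab, integral_Ioc_eq_integral_Ioo]
  exact integral_mono_of_nonneg (ae_restrict_of_forall_mem measurableSet_Ioo hf)
    (hg.1.mono_set Ioo_subset_Ioc_self) (ae_restrict_of_forall_mem measurableSet_Ioo hfg)

lemma div_rpow_mul_expKernel_le {p α β t s : ℝ} (hp1 : p ≤ 1) (hα : 0 ≤ α)
    (hβ : 0 ≤ β) (hs : 0 < s) (hst : s < t) :
    (t / s) ^ p * expKernel β α (t - s)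
      ≤ (t / s) ^ p * expKernel β α (t / 2) + 2 * expKernel β α (t - s) := by
  have hweight : 0 ≤ (t / s) ^ p := rpow_nonneg (div_nonneg (by linarith) hs.le) _
  have hK : 0 ≤ expKernel β α (t - s) := expKernel_nonneg (by linarith)
  rcases le_or_gt s (t / 2) with hs2 | hs2
  · have := expKernel_le_of_le hα hβ (u := t / 2) (by linarith) (by linarith : t / 2 ≤ t - s)
    nlinarith
  · have hts : 1 ≤ t / s := by rw [le_div_iff₀ hs]; linarith
    have h2 : (t / s) ^ p ≤ 2 := by
      calc (t / s) ^ p ≤ (t / s) ^ (1 : ℝ) := rpow_le_rpow_of_exponent_le hts hp1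
        _ ≤ 2 := by rw [rpow_one, div_le_iff₀ hs]; linarith
    have := expKernel_nonneg (β := β) (α := α) (by linarith : 0 ≤ t / 2)
    nlinarith

lemma intervalIntegrable_expKernel_sub {α β t : ℝ} (hα : α < 1) (hβ : 0 < β) (ht : 0 ≤ t) :
    IntervalIntegrable (fun s => expKernel β α (t - s)) volume 0 t := by
  simpa using ((intervalIntegrable_iff_integrableOn_Ioc_of_le ht).2
    ((integrableOn_expKernel hα hβ).mono_set Ioc_subset_Ioi_self)).comp_sub_left t |>.symm

lemma integral_div_rpow_mul_expKernel_le {p α β t : ℝ} (hp : p < 1) (hα0 : 0 ≤ α) (hα1 : α < 1)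
    (hβ : 0 < β) (ht : 0 < t) :
    ∫ s in 0..t, (t / s) ^ p * expKernel β α (t - s)
      ≤ t / (1 - p) * expKernel β α (t / 2) + 2 * (Gamma (1 - α) / β ^ (1 - α)) := by
  have hweight := (intervalIntegrable_div_rpow hp ht.le).mul_const (expKernel β α (t / 2))
  have hkernel := (intervalIntegrable_expKernel_sub hα1 hβ ht.le).const_mul 2
  calc ∫ s in 0..t, (t / s) ^ p * expKernel β α (t - s)
      ≤ ∫ s in 0..t, ((t / s) ^ p * expKernel β α (t / 2) + 2 * expKernel β α (t - s)) := by
        refine integral_le_of_nonneg_of_le_on_Ioo ht.le (hweight.add hkernel)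
          (fun s hs => ?_) fun s hs => div_rpow_mul_expKernel_le hp.le hα0 hβ.le hs.1 hs.2
        exact mul_nonneg (rpow_nonneg (div_nonneg ht.le hs.1.le) _)
          (expKernel_nonneg (by linarith [hs.2]))
    _ = t / (1 - p) * expKernel β α (t / 2) + 2 * ∫ u in 0..t, expKernel β α u := by
        rw [integral_add hweight hkernel, intervalIntegral.integral_mul_const,
          integral_div_rpow hp ht, intervalIntegral.integral_const_mul,
          integral_comp_sub_left (expKernel β α), sub_self, sub_zero]
    _ ≤ t / (1 - p) * expKernel β α (t / 2) + 2 * (Gamma (1 - α) / β ^ (1 - α)) := by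
        gcongr; exact integral_expKernel_le hα1 hβ ht.le

theorem sup_integral_bound (ε α β : ℝ) (hε0 : 0 < ε) (hε1 : ε < 1)
    (hα0 : 0 ≤ α) (hα1 : α < 1) (hβ : 1 ≤ β) (t : ℝ) (ht : 0 < t) :
    ∫ s in (0:ℝ)..t, (t / s) ^ (1 - ε) * (Real.exp (-β * (t - s)) / (t - s) ^ α)
      ≤ (2 * Real.Gamma (1 - α) + 1) / ((1 - α) * ε * β ^ (1 - α)) := by
  have hβ0 : 0 < β := by linarith
  have hcε : (1 - α) * ε ≤ 1 := by nlinarith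
  have hpeak : t / ε * expKernel β α (t / 2) ≤ 1 / ((1 - α) * ε * β ^ (1 - α)) := by
    calc t / ε * expKernel β α (t / 2) = t * expKernel β α (t / 2) / ε := by ring
      _ ≤ 1 / ((1 - α) * β ^ (1 - α)) / ε := by
        gcongr; exact mul_expKernel_half_le hα0 hα1 hβ0 ht
      _ = 1 / ((1 - α) * ε * β ^ (1 - α)) := by rw [div_div, mul_right_comm]
  have hgamma : 2 * (Gamma (1 - α) / β ^ (1 - α))
      ≤ 2 * Gamma (1 - α) / ((1 - α) * ε * β ^ (1 - α)) := by
    rw [← mul_div_assoc]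
    exact div_le_div_of_nonneg_left (by linarith [Gamma_pos_of_pos (by linarith : 0 < 1 - α)])
      (by positivity) (by nlinarith [rpow_pos_of_pos hβ0 (1 - α)])
  have hbound := integral_div_rpow_mul_expKernel_le (p := 1 - ε) (by linarith) hα0 hα1 hβ0 ht
  rw [sub_sub_cancel] at hbound
  rw [add_div, add_comm]
  exact hbound.trans (add_le_add hpeak hgamma)
end

section
/- Let p_t be the periodic heat kernel on [−1,1] defined by p_t(x,y) = Σ_{n∈ℤ} G_t(x−y+2n) with G the Gaussian heat kernel. There exists a finite constant C such that for all x, y ∈ [−1,1] and all t > 0, ∫_{−1}^{1} |p_t(x,w) − p_t(y,w)|² dw ≤ C |x−y| / min(t, √t). -/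
/-
`w ↦ p t x w` is the Gaussian of variance `2t` wrapped around the circle `ℝ / 2ℤ`. Comparing
the one-sided sums with Gaussian integrals bounds it by `1 + t^(-1/2)`, and its mass is at most
one. The mean value theorem applied term by term gives, when `|x - y| ≤ √t`, a bound of
`|p t x w - p t y w|` by `|x - y| / t` times a wrapped Gaussian of variance `8t`, whose mass
is `O(√t)`; hence `‖p t x - p t y‖₁ = O(|x - y| / √t)` in all cases. The `L²` norm is at most
the `L^∞` norm times the `L¹` norm.
-/

open Real MeasureTheory intervalIntegral

/-- The free-space heat kernel. -/
noncomputable def G (τ a : ℝ) : ℝ :=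
  (Real.sqrt (4 * Real.pi * τ))⁻¹ * Real.exp (-a ^ 2 / (4 * τ))

/-- The periodic heat kernel on the torus `[-1,1]`. -/
noncomputable def p (t x y : ℝ) : ℝ := ∑' n : ℤ, G t (x - y + 2 * (n : ℝ))

open Set

noncomputable def wrappedGaussian (c a : ℝ) : ℝ := ∑' n : ℤ, exp (-(a + 2 * n) ^ 2 / c)

section WrappedGaussian

variable {c : ℝ}

-- The right-hand side has the shape of `summable_pow_mul_jacobiTheta₂_term_bound`.
lemma exp_neg_sq_div_le_jacobiTheta₂_bound (hc : 0 < c) {a R : ℝ} (ha : |a| ≤ R) (n : ℤ) :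
    exp (-(a + 2 * n) ^ 2 / c) ≤
      exp (-π * (4 / (π * c) * n ^ 2 - 2 * (2 * R / (π * c)) * |(n : ℝ)|)) := by
  have han : -(a * n) ≤ R * |(n : ℝ)| :=
    (neg_le_abs _).trans (by rw [abs_mul]; exact mul_le_mul_of_nonneg_right ha (abs_nonneg _))
  rw [exp_le_exp, show -π * (4 / (π * c) * n ^ 2 - 2 * (2 * R / (π * c)) * |(n : ℝ)|)
    = -(4 * n ^ 2 - 4 * R * |(n : ℝ)|) / c by field_simp; ring]
  gcongr
  nlinarith [sq_nonneg a]

lemma summable_jacobiTheta₂_bound (hc : 0 < c) (R : ℝ) :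
    Summable fun n : ℤ =>
      exp (-π * (4 / (π * c) * n ^ 2 - 2 * (2 * R / (π * c)) * |(n : ℝ)|)) := by
  simpa [Int.cast_abs] using summable_pow_mul_jacobiTheta₂_term_bound
    (2 * R / (π * c)) (T := 4 / (π * c)) (by positivity) 0

lemma summable_wrappedGaussian_term (hc : 0 < c) (a : ℝ) :
    Summable fun n : ℤ => exp (-(a + 2 * n) ^ 2 / c) :=
  (summable_jacobiTheta₂_bound hc |a|).of_nonneg_of_le (fun _ => (exp_pos _).le)
    (exp_neg_sq_div_le_jacobiTheta₂_bound hc le_rfl)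

lemma continuous_wrappedGaussian (hc : 0 < c) : Continuous (wrappedGaussian c) := by
  refine continuous_iff_continuousAt.2 fun a => ContinuousOn.continuousAt ?_
    (Icc_mem_nhds (sub_one_lt a) (lt_add_one a))
  refine continuousOn_tsum (fun n => by fun_prop) (summable_jacobiTheta₂_bound hc (|a| + 1))
    fun n b hb => ?_
  rw [norm_of_nonneg (exp_pos _).le]
  refine exp_neg_sq_div_le_jacobiTheta₂_bound hc (abs_le.2 ⟨?_, ?_⟩) n <;>
    linarith [hb.1, hb.2, le_abs_self a, neg_abs_le a]

lemma wrappedGaussian_nonneg (c a : ℝ) : 0 ≤ wrappedGaussian c a :=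
  tsum_nonneg fun _ => (exp_pos _).le

lemma wrappedGaussian_neg (c a : ℝ) : wrappedGaussian c (-a) = wrappedGaussian c a := by
  rw [wrappedGaussian, ← (Equiv.neg ℤ).tsum_eq]
  congr 1 with n
  simp only [Equiv.neg_apply, Int.cast_neg]
  ring_nf

end WrappedGaussian

section SupBound

variable {c : ℝ}

lemma tsum_nat_exp_neg_sq_le (hc : 0 < c) {b : ℝ} (hb : 0 ≤ b) :
    ∑' n : ℕ, exp (-(b + 2 * n) ^ 2 / c) ≤ 1 + √(π * c) / 4 := by
  set f : ℝ → ℝ := fun u => exp (-(b + 2 * u) ^ 2 / c)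
  have hle : ∀ u ∈ Ioi (0 : ℝ), f u ≤ exp (-(4 / c) * u ^ 2) := fun u hu => by
    rw [exp_le_exp, neg_mul, div_mul_eq_mul_div, neg_div]
    gcongr
    nlinarith [mem_Ioi.1 hu]
  have hint : IntegrableOn f (Ioi 0) :=
    (integrable_exp_neg_mul_sq (b := 4 / c) (by positivity)).integrableOn.mono' (by fun_prop)
      ((ae_restrict_iff' measurableSet_Ioi).2 (ae_of_all _ fun u hu => by
        rw [norm_of_nonneg (exp_pos _).le]; exact hle u hu))
  have anti : AntitoneOn f (Ici 0) := fun u hu v hv huv => by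
    simp only [f, exp_le_exp]
    gcongr
    nlinarith [mem_Ici.1 hu]
  have hgauss : ∫ u in Ioi (0 : ℝ), exp (-(4 / c) * u ^ 2) = √(π * c) / 4 := by
    rw [integral_gaussian_Ioi, show π / (4 / c) = (π * c) / 2 ^ 2 by field_simp; norm_num,
      sqrt_div' _ (by norm_num), sqrt_sq (by norm_num)]
    ring
  calc ∑' n : ℕ, f n ≤ f 0 + ∫ u in Ioi 0, f u :=
        anti.tsum_le_integral hint fun _ _ => (exp_pos _).le
    _ ≤ 1 + √(π * c) / 4 := by
        gcongr
        · exact exp_le_one_iff.2 (div_nonpos_of_nonpos_of_nonneg (by nlinarith) hc.le)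
        · rw [← hgauss]
          exact setIntegral_mono_on hint
            (integrable_exp_neg_mul_sq (b := 4 / c) (by positivity)).integrableOn
            measurableSet_Ioi hle

lemma wrappedGaussian_le_of_nonneg_of_le (hc : 0 < c) {a : ℝ} (h₀ : 0 ≤ a) (h₂ : a ≤ 2) :
    wrappedGaussian c a ≤ 2 + √(π * c) / 2 := by
  have hs := summable_wrappedGaussian_term hc a
  have hneg : ∀ n : ℕ, exp (-(a + 2 * ((-(n + 1) : ℤ) : ℝ)) ^ 2 / c)
      = exp (-((2 - a) + 2 * n) ^ 2 / c) := fun n => by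
    congr 2
    push_cast
    ring
  have h1 : Summable fun n : ℕ => exp (-(a + 2 * ((n : ℤ) : ℝ)) ^ 2 / c) :=
    hs.comp_injective Nat.cast_injective
  have h2 : Summable fun n : ℕ => exp (-(a + 2 * ((-(n + 1) : ℤ) : ℝ)) ^ 2 / c) :=
    hs.comp_injective fun m n h => by simpa using h
  rw [wrappedGaussian, tsum_of_nat_of_neg_add_one
    (f := fun n : ℤ => exp (-(a + 2 * (n : ℝ)) ^ 2 / c)) h1 h2, tsum_congr hneg]
  simp only [Int.cast_natCast]
  linarith [tsum_nat_exp_neg_sq_le hc h₀, tsum_nat_exp_neg_sq_le hc (sub_nonneg.2 h₂)]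

lemma wrappedGaussian_le (hc : 0 < c) {a : ℝ} (ha : |a| ≤ 2) :
    wrappedGaussian c a ≤ 2 + √(π * c) / 2 := by
  rcases le_total 0 a with h | h
  · exact wrappedGaussian_le_of_nonneg_of_le hc h (le_of_abs_le ha)
  · rw [← wrappedGaussian_neg]
    exact wrappedGaussian_le_of_nonneg_of_le hc (neg_nonneg.2 h) (neg_le.1 (neg_le_of_abs_le ha))

end SupBound

section Integral

variable {c : ℝ}

lemma setIntegral_exp_neg_sq_shift (c x : ℝ) (n : ℤ) :
    ∫ w in Ioc (-1 : ℝ) 1, exp (-(x - w + 2 * n) ^ 2 / c)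
      = ∫ u in Ioc (x + 2 * n - 1) (x + 2 * n + 1), exp (-u ^ 2 / c) := by
  rw [← integral_of_le (by norm_num), ← integral_of_le (by linarith)]
  simp_rw [show ∀ w : ℝ, x - w + 2 * n = x + 2 * n - w from fun w => by ring]
  rw [integral_comp_sub_left (fun u => exp (-u ^ 2 / c))]
  ring_nf

lemma setIntegral_wrappedGaussian_le (hc : 0 < c) (x : ℝ) :
    ∫ w in Ioc (-1 : ℝ) 1, wrappedGaussian c (x - w) ≤ √(π * c) := by
  set I : ℤ → Set ℝ := fun n => Ioc (x + 2 * n - 1) (x + 2 * n + 1)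
  have hg : Integrable fun u : ℝ => exp (-u ^ 2 / c) := by
    simpa [neg_div, div_eq_inv_mul] using integrable_exp_neg_mul_sq (inv_pos.2 hc)
  have hdisj : Pairwise (Function.onFun Disjoint I) := by
    intro m n hmn
    wlog h : m < n generalizing m n
    · exact (this hmn.symm (hmn.lt_or_gt.resolve_left h)).symm
    have : (m : ℝ) + 1 ≤ n := by exact_mod_cast h
    exact Ioc_disjoint_Ioc_of_le (by linarith)
  have hsum : HasSum (fun n : ℤ => ∫ w in Ioc (-1 : ℝ) 1, exp (-(x - w + 2 * n) ^ 2 / c))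
      (∫ u in ⋃ n, I n, exp (-u ^ 2 / c)) := by
    simpa only [setIntegral_exp_neg_sq_shift] using
      hasSum_integral_iUnion (fun n => measurableSet_Ioc) hdisj hg.integrableOn
  have hterms : ∀ n : ℤ, IntegrableOn (fun w => exp (-(x - w + 2 * n) ^ 2 / c)) (Ioc (-1) 1) :=
    fun n => (by fun_prop : Continuous _).integrableOn_Ioc
  calc ∫ w in Ioc (-1 : ℝ) 1, wrappedGaussian c (x - w)
      = ∑' n : ℤ, ∫ w in Ioc (-1 : ℝ) 1, exp (-(x - w + 2 * n) ^ 2 / c) :=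
        (integral_tsum_of_summable_integral_norm hterms
          (by simpa only [norm_eq_abs, abs_exp] using hsum.summable)).symm
    _ = ∫ u in ⋃ n, I n, exp (-u ^ 2 / c) := hsum.tsum_eq
    _ ≤ ∫ u, exp (-u ^ 2 / c) :=
        setIntegral_le_integral hg (ae_of_all _ fun _ => (exp_pos _).le)
    _ = √(π * c) := by
        simpa [neg_div, div_eq_inv_mul, mul_comm π c] using integral_gaussian c⁻¹

end Integral

section HeatKernel

variable {t : ℝ}

lemma p_eq_wrappedGaussian (t x w : ℝ) :
    p t x w = (√(4 * π * t))⁻¹ * wrappedGaussian (4 * t) (x - w) := by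
  rw [p, wrappedGaussian, ← tsum_mul_left]
  rfl

lemma p_nonneg (t x w : ℝ) : 0 ≤ p t x w := by
  rw [p_eq_wrappedGaussian]
  exact mul_nonneg (inv_nonneg.2 (sqrt_nonneg _)) (wrappedGaussian_nonneg _ _)

lemma continuous_p (ht : 0 < t) (x : ℝ) : Continuous (p t x) := by
  simp_rw [funext (p_eq_wrappedGaussian t x)]
  exact continuous_const.mul ((continuous_wrappedGaussian (by positivity)).comp (by fun_prop))

lemma p_le (ht : 0 < t) {x w : ℝ} (hxw : |x - w| ≤ 2) : p t x w ≤ 1 + (√t)⁻¹ := by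
  have h2 : 2 * √t ≤ √(4 * π * t) := by
    rw [le_sqrt (by positivity) (by positivity), mul_pow, sq_sqrt ht.le]
    nlinarith [pi_gt_three]
  rw [p_eq_wrappedGaussian]
  calc (√(4 * π * t))⁻¹ * wrappedGaussian (4 * t) (x - w)
      ≤ (√(4 * π * t))⁻¹ * (2 + √(π * (4 * t)) / 2) := by
        gcongr
        exact wrappedGaussian_le (by positivity) hxw
    _ = 2 / √(4 * π * t) + 1 / 2 := by
        rw [show π * (4 * t) = 4 * π * t by ring]
        field_simp
    _ ≤ 2 / (2 * √t) + 1 := by gcongr; norm_num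
    _ = 1 + (√t)⁻¹ := by field_simp; ring

lemma integral_p_le_one (ht : 0 < t) (x : ℝ) : ∫ w in (-1 : ℝ)..1, p t x w ≤ 1 := by
  have hs : 0 < √(4 * π * t) := by positivity
  simp_rw [p_eq_wrappedGaussian, intervalIntegral.integral_const_mul,
    integral_of_le (by norm_num : (-1 : ℝ) ≤ 1)]
  calc (√(4 * π * t))⁻¹ * ∫ w in Ioc (-1 : ℝ) 1, wrappedGaussian (4 * t) (x - w)
      ≤ (√(4 * π * t))⁻¹ * √(π * (4 * t)) := by
        gcongr
        exact setIntegral_wrappedGaussian_le (by positivity) x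
    _ = 1 := by rw [show π * (4 * t) = 4 * π * t by ring, inv_mul_cancel₀ hs.ne']

lemma abs_p_sub_le_one_add_inv_sqrt (ht : 0 < t) {x y w : ℝ} (hx : x ∈ Icc (-1 : ℝ) 1)
    (hy : y ∈ Icc (-1 : ℝ) 1) (hw : w ∈ Icc (-1 : ℝ) 1) :
    |p t x w - p t y w| ≤ 1 + (√t)⁻¹ := by
  have hdist : ∀ z ∈ Icc (-1 : ℝ) 1, |z - w| ≤ 2 := fun z hz => by
    simpa [dist_eq] using (Real.dist_le_of_mem_Icc hz hw).trans_eq (by norm_num)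
  exact abs_sub_le_of_nonneg_of_le (p_nonneg t x w) (p_le ht (hdist x hx))
    (p_nonneg t y w) (p_le ht (hdist y hy))

end HeatKernel

section Lipschitz

variable {t : ℝ}

lemma hasDerivAt_G (t s : ℝ) : HasDerivAt (G t) (-(s / (2 * t)) * G t s) s := by
  have h : HasDerivAt (fun u : ℝ => -u ^ 2 / (4 * t)) (-(2 * s) / (4 * t)) s := by
    simpa using ((hasDerivAt_pow 2 s).neg).div_const (4 * t)
  rw [show -(s / (2 * t)) * G t s
      = (√(4 * π * t))⁻¹ * (exp (-s ^ 2 / (4 * t)) * (-(2 * s) / (4 * t))) by unfold G; ring]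
  exact h.exp.const_mul _

lemma abs_mul_exp_neg_sq_le (ht : 0 < t) (s : ℝ) :
    |s| * exp (-s ^ 2 / (4 * t)) ≤ √(2 * t) * exp (-s ^ 2 / (8 * t)) := by
  set r := √(2 * t)
  have hr : 0 < r := by positivity
  have hr2 : r ^ 2 = 2 * t := sq_sqrt (by positivity)
  -- AM-GM: `|s| ≤ r + s² / (4r)`.
  have hamgm : |s| ≤ r * (1 + s ^ 2 / (8 * t)) := by
    rw [show r * (1 + s ^ 2 / (8 * t)) = r + s ^ 2 / (4 * r) by field_simp; nlinarith,
      ← sub_nonneg, show r + s ^ 2 / (4 * r) - |s| = (|s| - 2 * r) ^ 2 / (4 * r) by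
        field_simp; linear_combination -sq_abs s]
    positivity
  calc |s| * exp (-s ^ 2 / (4 * t)) ≤ r * exp (s ^ 2 / (8 * t)) * exp (-s ^ 2 / (4 * t)) := by
        gcongr
        exact hamgm.trans (by gcongr; linarith [add_one_le_exp (s ^ 2 / (8 * t))])
    _ = r * exp (-s ^ 2 / (8 * t)) := by
        rw [mul_assoc, ← exp_add]
        congr 2
        field_simp
        ring

lemma abs_deriv_G_le (ht : 0 < t) (s : ℝ) :
    |s / (2 * t) * G t s| ≤ exp (-s ^ 2 / (8 * t)) / (4 * t) := by
  have h2 : 2 * √(2 * t) ≤ √(4 * π * t) := by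
    rw [le_sqrt (by positivity) (by positivity), mul_pow, sq_sqrt (by positivity)]
    nlinarith [pi_gt_three]
  calc |s / (2 * t) * G t s| = |s| * exp (-s ^ 2 / (4 * t)) / (2 * t * √(4 * π * t)) := by
        rw [G, abs_mul, abs_mul, abs_div, abs_of_pos (by positivity : 0 < 2 * t),
          abs_of_pos (by positivity : 0 < (√(4 * π * t))⁻¹), abs_of_pos (exp_pos _)]
        field_simp
    _ ≤ √(2 * t) * exp (-s ^ 2 / (8 * t)) / (2 * t * (2 * √(2 * t))) :=
        div_le_div₀ (by positivity) (abs_mul_exp_neg_sq_le ht s) (by positivity) (by gcongr)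
    _ = exp (-s ^ 2 / (8 * t)) / (4 * t) := by field_simp; ring

lemma exp_neg_sq_div_le_of_sq_sub_le (ht : 0 < t) {a s : ℝ} (h : (a - s) ^ 2 ≤ t) :
    exp (-s ^ 2 / (8 * t)) ≤ 4 * exp (-a ^ 2 / (16 * t)) := by
  have he : exp (1 / 8) ≤ 4 := by
    linarith [exp_le_exp.2 (by norm_num : (1 / 8 : ℝ) ≤ 1), exp_one_lt_d9]
  calc exp (-s ^ 2 / (8 * t)) ≤ exp (1 / 8 + -a ^ 2 / (16 * t)) := by
        rw [exp_le_exp, div_add_div _ _ (by norm_num) (by positivity),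
          div_le_div_iff₀ (by positivity) (by positivity)]
        nlinarith [sq_nonneg (a - 2 * s)]
    _ ≤ 4 * exp (-a ^ 2 / (16 * t)) := by
        rw [exp_add]
        gcongr

lemma abs_G_sub_le (ht : 0 < t) {a b : ℝ} (hab : (a - b) ^ 2 ≤ t) :
    |G t a - G t b| ≤ |a - b| / t * exp (-a ^ 2 / (16 * t)) := by
  have hderiv :
      ∀ s ∈ uIcc a b, ‖-(s / (2 * t)) * G t s‖ ≤ exp (-a ^ 2 / (16 * t)) / t := by
    intro s hs
    have has : (a - s) ^ 2 ≤ t :=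
      calc (a - s) ^ 2 = |s - a| ^ 2 := by rw [sq_abs]; ring
        _ ≤ |b - a| ^ 2 := pow_le_pow_left₀ (abs_nonneg _) (abs_sub_left_of_mem_uIcc hs) 2
        _ = (a - b) ^ 2 := by rw [sq_abs]; ring
        _ ≤ t := hab
    rw [neg_mul, norm_neg, norm_eq_abs]
    calc |s / (2 * t) * G t s| ≤ exp (-s ^ 2 / (8 * t)) / (4 * t) := abs_deriv_G_le ht s
      _ ≤ 4 * exp (-a ^ 2 / (16 * t)) / (4 * t) := by
          gcongr
          exact exp_neg_sq_div_le_of_sq_sub_le ht has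
      _ = exp (-a ^ 2 / (16 * t)) / t := by field_simp
  have := (convex_uIcc a b).norm_image_sub_le_of_norm_hasDerivWithin_le
    (fun s _ => (hasDerivAt_G t s).hasDerivWithinAt) hderiv right_mem_uIcc left_mem_uIcc
  rw [norm_eq_abs, norm_eq_abs] at this
  calc |G t a - G t b| ≤ exp (-a ^ 2 / (16 * t)) / t * |a - b| := this
    _ = |a - b| / t * exp (-a ^ 2 / (16 * t)) := by ring

lemma abs_p_sub_le (ht : 0 < t) {x y : ℝ} (hxy : (x - y) ^ 2 ≤ t) (w : ℝ) :
    |p t x w - p t y w| ≤ |x - y| / t * wrappedGaussian (16 * t) (x - w) := by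
  have hG : ∀ z, Summable fun n : ℤ => G t (z - w + 2 * n) := fun z =>
    (summable_wrappedGaussian_term (by positivity) (z - w)).mul_left (√(4 * π * t))⁻¹
  rw [p, p, ← (hG x).tsum_sub (hG y), ← norm_eq_abs]
  refine tsum_of_norm_bounded
    ((summable_wrappedGaussian_term (by positivity) (x - w)).hasSum.mul_left (|x - y| / t))
    fun n => ?_
  have hdiff : x - w + 2 * n - (y - w + 2 * n) = x - y := by ring
  have := abs_G_sub_le ht (a := x - w + 2 * n) (b := y - w + 2 * n) (by rwa [hdiff])
  rwa [hdiff, ← norm_eq_abs] at this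

end Lipschitz

section L1Bound

variable {t : ℝ}

lemma integral_abs_p_sub_le_two (ht : 0 < t) (x y : ℝ) :
    ∫ w in (-1 : ℝ)..1, |p t x w - p t y w| ≤ 2 := by
  have hx := (continuous_p ht x).intervalIntegrable (μ := volume) (-1) 1
  have hy := (continuous_p ht y).intervalIntegrable (μ := volume) (-1) 1
  calc ∫ w in (-1 : ℝ)..1, |p t x w - p t y w|
      ≤ ∫ w in (-1 : ℝ)..1, (p t x w + p t y w) :=
        integral_mono_on (by norm_num) (hx.sub hy).abs (hx.add hy) fun w _ =>
          abs_sub_le_iff.2 ⟨by linarith [p_nonneg t y w], by linarith [p_nonneg t x w]⟩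
    _ ≤ 2 := by
        rw [integral_add hx hy]
        linarith [integral_p_le_one ht x, integral_p_le_one ht y]

lemma integral_abs_p_sub_le_of_sq_le (ht : 0 < t) {x y : ℝ} (hxy : (x - y) ^ 2 ≤ t) :
    ∫ w in (-1 : ℝ)..1, |p t x w - p t y w| ≤ 8 * |x - y| / √t := by
  have hs : √(π * (16 * t)) ≤ 8 * √t := by
    rw [sqrt_le_left (by positivity), mul_pow, sq_sqrt ht.le]
    nlinarith [pi_lt_four]
  calc ∫ w in (-1 : ℝ)..1, |p t x w - p t y w|
      ≤ ∫ w in (-1 : ℝ)..1, |x - y| / t * wrappedGaussian (16 * t) (x - w) :=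
        integral_mono_on (by norm_num)
          (((continuous_p ht x).sub (continuous_p ht y)).abs.intervalIntegrable _ _)
          ((continuous_const.mul ((continuous_wrappedGaussian (by positivity)).comp
            (continuous_const.sub continuous_id))).intervalIntegrable _ _)
          fun w _ => abs_p_sub_le ht hxy w
    _ ≤ |x - y| / t * √(π * (16 * t)) := by
        rw [intervalIntegral.integral_const_mul, integral_of_le (by norm_num)]
        gcongr
        exact setIntegral_wrappedGaussian_le (by positivity) x
    _ ≤ |x - y| / t * (8 * √t) := by gcongr
    _ = 8 * |x - y| / √t := by
        field_simp
        rw [sq_sqrt ht.le]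

lemma integral_abs_p_sub_le (ht : 0 < t) (x y : ℝ) :
    ∫ w in (-1 : ℝ)..1, |p t x w - p t y w| ≤ 8 * |x - y| / √t := by
  rcases le_total √t |x - y| with h | h
  · refine (integral_abs_p_sub_le_two ht x y).trans ?_
    rw [le_div_iff₀ (by positivity)]
    linarith [sqrt_nonneg t]
  · exact integral_abs_p_sub_le_of_sq_le ht (by
      rw [← sq_abs, ← sq_sqrt ht.le]; exact pow_le_pow_left₀ (abs_nonneg _) h 2)

end L1Bound

theorem heat_kernel_space_increment_L2 :
    ∃ C : ℝ, 0 ≤ C ∧ ∀ t x y : ℝ, 0 < t →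
      x ∈ Set.Icc (-1 : ℝ) 1 → y ∈ Set.Icc (-1 : ℝ) 1 →
      (∫ w in (-1 : ℝ)..1, (p t x w - p t y w) ^ 2)
        ≤ C * |x - y| / min t (Real.sqrt t) := by
  refine ⟨16, by norm_num, fun t x y ht hx hy => ?_⟩
  set M := 1 + (√t)⁻¹
  have hdiff : Continuous fun w => p t x w - p t y w :=
    (continuous_p ht x).sub (continuous_p ht y)
  calc ∫ w in (-1 : ℝ)..1, (p t x w - p t y w) ^ 2
      ≤ ∫ w in (-1 : ℝ)..1, M * |p t x w - p t y w| :=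
        integral_mono_on (by norm_num) ((hdiff.pow 2).intervalIntegrable _ _)
          ((continuous_const.mul hdiff.abs).intervalIntegrable _ _) fun w hw => by
            rw [← sq_abs, sq]
            exact mul_le_mul_of_nonneg_right
              (abs_p_sub_le_one_add_inv_sqrt ht hx hy hw) (abs_nonneg _)
    _ ≤ M * (8 * |x - y| / √t) := by
        rw [intervalIntegral.integral_const_mul]
        gcongr
        exact integral_abs_p_sub_le ht x y
    _ = 8 * |x - y| * ((√t)⁻¹ + t⁻¹) := by
        simp only [M]
        field_simp
        linear_combination -|x - y| * mul_self_sqrt ht.le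
    _ ≤ 8 * |x - y| * ((min t √t)⁻¹ + (min t √t)⁻¹) := by
        gcongr
        exacts [min_le_right _ _, min_le_left _ _]
    _ = 16 * |x - y| / min t √t := by ring
end

section
/- Let p_t be the periodic heat kernel on [−1,1]. For each t, δ > 0, sup_{x∈[−1,1]} ∫_{−1}^{1} |p_{t+δ}(x,w) − p_t(x,w)|² dw ≤ √(π/(2t)) · min(1, δ/(4t)). -/
open Real MeasureTheory intervalIntegral

/-!
Poisson summation turns the periodic heat kernel into the Fourier series
`p t x y = ½ ∑ₙ e^{-π²tn²} e^{iπn(x-y)}`, so by Parseval the squared `L²` norm of the time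
increment is `½ ∑ₙ cₙ²` with `cₙ = e^{-π²(t+δ)n²} - e^{-π²tn²}`. Here `c₀ = 0`, and
`cₙ² ≤ e^{-2π²tn²}` as well as `cₙ² ≤ (δ/t) e^{-π²tn²}` (from `1 - e^{-B} ≤ B` and `A e^{-A} ≤ 1`);
a Gaussian sum over `n ≠ 0` is at most the Gaussian integral `√(π/a)`.
-/

open Complex

theorem summable_exp_neg_mul_sq {a : ℝ} (ha : 0 < a) :
    Summable fun n : ℤ => rexp (-a * n ^ 2) := by
  refine ((summable_jacobiTheta₂_term_iff 0 ((a / π : ℝ) * I)).mpr ?_).norm.congr fun n => ?_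
  · simpa using div_pos ha pi_pos
  · rw [norm_jacobiTheta₂_term, mul_I_im, ofReal_re, zero_im]
    field_simp
    ring_nf

theorem sum_range_exp_neg_mul_succ_sq_le {a : ℝ} (ha : 0 < a) (N : ℕ) :
    ∑ k ∈ Finset.range N, rexp (-a * ((k + 1 : ℕ) : ℝ) ^ 2) ≤ √(π / a) / 2 := by
  have hanti : AntitoneOn (fun x : ℝ => rexp (-a * x ^ 2)) (Set.Icc 0 (0 + N)) := by
    intro x hx y hy hxy
    have := pow_le_pow_left₀ hx.1 hxy 2
    exact exp_le_exp.mpr (by nlinarith)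
  calc ∑ k ∈ Finset.range N, rexp (-a * ((k + 1 : ℕ) : ℝ) ^ 2)
      ≤ ∫ x in (0 : ℝ)..0 + N, rexp (-a * x ^ 2) := by simpa using hanti.sum_le_integral
    _ ≤ ∫ x in Set.Ioi (0 : ℝ), rexp (-a * x ^ 2) := by
      rw [zero_add, intervalIntegral.integral_of_le (Nat.cast_nonneg N)]
      exact setIntegral_mono_set (integrable_exp_neg_mul_sq ha).integrableOn
        (.of_forall fun x => (exp_pos _).le) (.of_forall Set.Ioc_subset_Ioi_self)
    _ = √(π / a) / 2 := integral_gaussian_Ioi a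

theorem tsum_le_mul_sqrt_of_le_gaussian {a C : ℝ} (ha : 0 < a) {f : ℤ → ℝ}
    (hf0 : f 0 = 0) (hf : ∀ n, 0 ≤ f n) (hfC : ∀ n, f n ≤ C * rexp (-a * n ^ 2)) :
    ∑' n, f n ≤ C * √(π / a) := by
  have hC : 0 ≤ C := by simpa using (hf 0).trans (hfC 0)
  have hsum : Summable f := ((summable_exp_neg_mul_sq ha).mul_left C).of_nonneg_of_le hf hfC
  have half {g : ℕ → ℝ} (hg : ∀ k, 0 ≤ g k)
      (hgC : ∀ k, g k ≤ C * rexp (-a * ((k + 1 : ℕ) : ℝ) ^ 2)) : ∑' k, g k ≤ C * (√(π / a) / 2) := by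
    refine Real.tsum_le_of_sum_range_le hg fun N => ?_
    grw [Finset.sum_le_sum fun k _ => hgC k, ← Finset.mul_sum, sum_range_exp_neg_mul_succ_sq_le ha]
  rw [tsum_of_add_one_of_neg_add_one (hsum.comp_injective fun _ _ h => by simpa using h)
    (hsum.comp_injective fun _ _ h => by simpa using h), hf0]
  have h1 := half (g := fun k : ℕ => f (k + 1)) (fun k => hf _)
    fun k => (hfC _).trans_eq (by push_cast; ring_nf)
  have h2 := half (g := fun k : ℕ => f (-(k + 1))) (fun k => hf _)
    fun k => (hfC _).trans_eq (by push_cast; ring_nf)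
  linarith

theorem intervalIntegral_tsum_of_norm_le {ι E : Type*} [Countable ι] [NormedAddCommGroup E]
    [NormedSpace ℝ E] [CompleteSpace E] {F : ι → ℝ → E} {b : ι → ℝ} {a₁ a₂ : ℝ}
    (hF : ∀ n, Continuous (F n)) (hb : Summable b) (hFb : ∀ n u, ‖F n u‖ ≤ b n) :
    ∫ u in a₁..a₂, ∑' n, F n u = ∑' n, ∫ u in a₁..a₂, F n u :=
  (intervalIntegral.hasSum_integral_of_dominated_convergence (fun n _ => b n)
    (fun n => (hF n).aestronglyMeasurable) (fun n => .of_forall fun u _ => hFb n u)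
    (.of_forall fun _ _ => hb) intervalIntegrable_const
    (.of_forall fun u _ => (hb.of_norm_bounded (hFb · u)).hasSum)).tsum_eq.symm

theorem norm_exp_pi_int_mul_I (n : ℤ) (u : ℝ) : ‖cexp (π * n * u * I)‖ = 1 := by
  simpa using norm_exp_ofReal_mul_I (π * n * u)

theorem norm_real_mul_exp_pi_int_mul_I (a : ℝ) (n : ℤ) (u : ℝ) :
    ‖(a : ℂ) * cexp (π * n * u * I)‖ = |a| := by
  rw [norm_mul, norm_exp_pi_int_mul_I, mul_one, norm_real, Real.norm_eq_abs]

theorem integral_exp_pi_int_mul_I (k : ℤ) :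
    ∫ u in (-1 : ℝ)..1, cexp (π * k * u * I) = if k = 0 then 2 else 0 := by
  split_ifs with hk
  · simp [hk]
    norm_num
  have hc : (π * k * I : ℂ) ≠ 0 := by simp [Real.pi_ne_zero, hk]
  have hperiod : cexp (π * k * I * (1 : ℝ)) = cexp (π * k * I * (-1 : ℝ)) := by
    rw [show (π * k * I * (1 : ℝ) : ℂ) = π * k * I * (-1 : ℝ) + k * (2 * π * I) by
      push_cast; ring, Complex.exp_add, exp_int_mul_two_pi_mul_I, mul_one]
  simp_rw [show ∀ u : ℝ, (π * k * u * I : ℂ) = π * k * I * u from fun u => by ring]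
  rw [integral_exp_mul_complex hc, hperiod, sub_self, zero_div]

noncomputable def fourierSum (c : ℤ → ℝ) (u : ℝ) : ℂ := ∑' n : ℤ, c n * cexp (π * n * u * I)

section fourierSum

variable {c : ℤ → ℝ}

theorem summable_fourierSum_term (hc : Summable fun n => |c n|) (u : ℝ) :
    Summable fun n : ℤ => (c n : ℂ) * cexp (π * n * u * I) :=
  hc.of_norm_bounded fun n => (norm_real_mul_exp_pi_int_mul_I _ n u).le

theorem continuous_fourierSum (hc : Summable fun n => |c n|) : Continuous (fourierSum c) :=
  continuous_tsum (fun n => by fun_prop) hc fun n u => (norm_real_mul_exp_pi_int_mul_I _ n u).le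

theorem norm_fourierSum_le (hc : Summable fun n => |c n|) (u : ℝ) :
    ‖fourierSum c u‖ ≤ ∑' n, |c n| :=
  tsum_of_norm_bounded hc.hasSum fun n => (norm_real_mul_exp_pi_int_mul_I _ n u).le

theorem fourierSum_sub {d : ℤ → ℝ} (hc : Summable fun n => |c n|) (hd : Summable fun n => |d n|)
    (u : ℝ) : fourierSum c u - fourierSum d u = fourierSum (c - d) u := by
  rw [fourierSum, fourierSum, fourierSum,
    ← (summable_fourierSum_term hc u).tsum_sub (summable_fourierSum_term hd u)]
  simp [sub_mul]

theorem fourierSum_periodic : Function.Periodic (fourierSum c) 2 := fun u => by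
  unfold fourierSum
  refine tsum_congr fun n => ?_
  rw [show (π * n * (u + 2 : ℝ) * I : ℂ) = π * n * u * I + n * (2 * π * I) by push_cast; ring,
    Complex.exp_add, exp_int_mul_two_pi_mul_I, mul_one]

theorem integral_exp_mul_fourierSum (hc : Summable fun n => |c n|) (n : ℤ) :
    ∫ u in (-1 : ℝ)..1, cexp (π * n * u * I) * fourierSum c u = 2 * c (-n) := by
  have hshift (u : ℝ) : cexp (π * n * u * I) * fourierSum c u
      = ∑' m : ℤ, c m * cexp (π * (n + m : ℤ) * u * I) := by
    rw [fourierSum, ← tsum_mul_left]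
    refine tsum_congr fun m => ?_
    rw [mul_left_comm, ← Complex.exp_add]
    push_cast
    ring_nf
  simp_rw [hshift]
  rw [intervalIntegral_tsum_of_norm_le (fun m => by fun_prop) hc
    fun m u => (norm_real_mul_exp_pi_int_mul_I _ _ u).le]
  simp_rw [intervalIntegral.integral_const_mul, integral_exp_pi_int_mul_I, mul_ite, mul_zero]
  rw [tsum_eq_single (-n) fun m hm => if_neg (by omega), if_pos (by omega), mul_comm]

theorem integral_fourierSum_sq (hc : Summable fun n => |c n|) :
    ∫ u in (-1 : ℝ)..1, fourierSum c u ^ 2 = 2 * ∑' n, (c n * c (-n) : ℝ) := by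
  have hexpand (u : ℝ) : fourierSum c u ^ 2
      = ∑' n : ℤ, c n * (cexp (π * n * u * I) * fourierSum c u) := by
    rw [sq, fourierSum, ← tsum_mul_right]
    exact tsum_congr fun n => mul_assoc _ _ _
  have hbound (n : ℤ) (u : ℝ) :
      ‖(c n : ℂ) * (cexp (π * n * u * I) * fourierSum c u)‖ ≤ |c n| * ∑' m, |c m| := by
    rw [← mul_assoc, norm_mul, norm_real_mul_exp_pi_int_mul_I]
    exact mul_le_mul_of_nonneg_left (norm_fourierSum_le hc u) (abs_nonneg _)
  have hcont := continuous_fourierSum hc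
  simp_rw [hexpand]
  rw [intervalIntegral_tsum_of_norm_le (fun n => by fun_prop) (hc.mul_right _) hbound]
  simp_rw [intervalIntegral.integral_const_mul, integral_exp_mul_fourierSum hc]
  push_cast
  rw [← tsum_mul_left]
  exact tsum_congr fun n => by ring

end fourierSum

noncomputable def heatCoeff (t : ℝ) (n : ℤ) : ℝ := rexp (-(π ^ 2 * t) * n ^ 2)

section heatKernel

variable {t : ℝ}

theorem summable_abs_heatCoeff (ht : 0 < t) : Summable fun n => |heatCoeff t n| := by
  simpa [heatCoeff, abs_of_pos (exp_pos _)] using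
    summable_exp_neg_mul_sq (by positivity : 0 < π ^ 2 * t)

theorem p_eq_fourierSum (ht : 0 < t) (x y : ℝ) :
    (p t x y : ℂ) = 1 / 2 * fourierSum (heatCoeff t) (x - y) := by
  set u := x - y
  set a : ℂ := (((π * t)⁻¹ : ℝ) : ℂ)
  set b : ℂ := ((-u / (2 * π * t) : ℝ) : ℂ)
  set K : ℝ := (√(4 * π * t))⁻¹ * rexp (-u ^ 2 / (4 * t))
  have htC : (t : ℂ) ≠ 0 := ofReal_ne_zero.mpr ht.ne'
  have hπC : (π : ℂ) ≠ 0 := ofReal_ne_zero.mpr pi_ne_zero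
  have ha : 0 < a.re := by simp only [a, ofReal_re]; positivity
  have hG (n : ℤ) : (G t (u + 2 * n) : ℂ) = K * cexp (-π * a * n ^ 2 + 2 * π * b * n) := by
    have : -(u + 2 * n) ^ 2 / (4 * t) = -u ^ 2 / (4 * t) + (-n ^ 2 / t - u * n / t) := by
      field_simp; ring
    rw [G, this, Real.exp_add, ← mul_assoc, ofReal_mul, ofReal_exp]
    congr 2
    simp only [a, b]
    push_cast
    field_simp
    ring
  have hθ (n : ℤ) : cexp (-π / a * (n + I * b) ^ 2)
      = rexp (u ^ 2 / (4 * t)) * (heatCoeff t n * cexp (π * n * u * I)) := by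
    rw [heatCoeff, ofReal_exp, ofReal_exp, ← Complex.exp_add, ← Complex.exp_add]
    congr 1
    simp only [a, b]
    push_cast
    field_simp
    ring_nf
    rw [I_sq]
    ring
  have hroot : 1 / a ^ (1 / 2 : ℂ) = √(π * t) := by
    rw [show (1 / 2 : ℂ) = ((1 / 2 : ℝ) : ℂ) by push_cast; ring, ← ofReal_cpow (by positivity),
      ← Real.sqrt_eq_rpow, Real.sqrt_inv, ofReal_inv, one_div, inv_inv]
  have hK : K * √(π * t) * rexp (u ^ 2 / (4 * t)) = 1 / 2 := by
    have h4 : √(4 * π * t) = 2 * √(π * t) := by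
      rw [mul_assoc, Real.sqrt_mul (by norm_num), show (4 : ℝ) = 2 ^ 2 by norm_num,
        Real.sqrt_sq (by norm_num)]
    have he : rexp (-u ^ 2 / (4 * t)) * rexp (u ^ 2 / (4 * t)) = 1 := by
      rw [← Real.exp_add, neg_div, neg_add_cancel, Real.exp_zero]
    have hpos : 0 < √(π * t) := by positivity
    calc K * √(π * t) * rexp (u ^ 2 / (4 * t))
        = 2⁻¹ * ((√(π * t))⁻¹ * √(π * t)) * (rexp (-u ^ 2 / (4 * t)) * rexp (u ^ 2 / (4 * t))) := by
          simp only [K, h4, mul_inv]; ring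
      _ = 1 / 2 := by rw [inv_mul_cancel₀ hpos.ne', he]; norm_num
  calc (p t x y : ℂ) = ∑' n : ℤ, (G t (u + 2 * n) : ℂ) := ofReal_tsum _
    _ = K * (1 / a ^ (1 / 2 : ℂ) * ∑' n : ℤ, cexp (-π / a * (n + I * b) ^ 2)) := by
      simp_rw [hG, tsum_mul_left, tsum_exp_neg_quadratic ha]
    _ = (K * √(π * t) * rexp (u ^ 2 / (4 * t)) : ℝ) * fourierSum (heatCoeff t) u := by
      simp_rw [hθ, tsum_mul_left, hroot, fourierSum]
      push_cast
      ring
    _ = 1 / 2 * fourierSum (heatCoeff t) u := by rw [hK]; push_cast; ring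

end heatKernel

theorem integral_sq_p_sub_p {s t : ℝ} (hs : 0 < s) (ht : 0 < t) (x : ℝ) :
    ∫ w in (-1 : ℝ)..1, (p s x w - p t x w) ^ 2
      = 1 / 2 * ∑' n, (heatCoeff s n - heatCoeff t n) ^ 2 := by
  set c := heatCoeff s - heatCoeff t
  have hc : Summable fun n => |c n| :=
    ((summable_abs_heatCoeff hs).add (summable_abs_heatCoeff ht)).of_nonneg_of_le
      (fun _ => abs_nonneg _) fun n => abs_sub _ _
  have hdiff (w : ℝ) : ((p s x w - p t x w : ℝ) : ℂ) = 1 / 2 * fourierSum c (x - w) := by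
    rw [ofReal_sub, p_eq_fourierSum hs, p_eq_fourierSum ht, ← mul_sub,
      fourierSum_sub (summable_abs_heatCoeff hs) (summable_abs_heatCoeff ht)]
  have heven (n : ℤ) : c (-n) = c n := by simp [c, heatCoeff]
  have hshift : ∫ w in (-1 : ℝ)..1, fourierSum c (x - w) ^ 2
      = ∫ u in (-1 : ℝ)..1, fourierSum c u ^ 2 := by
    have h := (fourierSum_periodic (c := c)).comp (· ^ 2) |>.intervalIntegral_add_eq (x - 1) (-1)
    rw [show x - 1 + 2 = x + 1 by ring, show (-1 : ℝ) + 2 = 1 by norm_num] at h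
    rw [intervalIntegral.integral_comp_sub_left (fun u => fourierSum c u ^ 2), sub_neg_eq_add]
    exact h
  apply ofReal_injective
  calc ((∫ w in (-1 : ℝ)..1, (p s x w - p t x w) ^ 2 : ℝ) : ℂ)
      = ∫ w in (-1 : ℝ)..1, 1 / 4 * fourierSum c (x - w) ^ 2 := by
        rw [← intervalIntegral.integral_ofReal]
        congr 1 with w
        rw [ofReal_pow, hdiff]
        ring
    _ = 1 / 4 * ∫ u in (-1 : ℝ)..1, fourierSum c u ^ 2 := by
        rw [intervalIntegral.integral_const_mul, hshift]
    _ = ((1 / 2 * ∑' n, c n ^ 2 : ℝ) : ℂ) := by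
        simp_rw [integral_fourierSum_sq hc, heven, ← sq]
        push_cast
        ring

theorem sq_exp_neg_mul_one_sub_exp_neg_le {A B r : ℝ} (hB : 0 ≤ B) (hr : 0 ≤ r)
    (hBr : B ≤ r * A) : (rexp (-A) * (1 - rexp (-B))) ^ 2 ≤ r * rexp (-A) := by
  have h1 : 0 ≤ 1 - rexp (-B) := sub_nonneg.mpr (exp_le_one_iff.mpr (by linarith))
  have h2 : 1 - rexp (-B) ≤ B := by linarith [add_one_le_exp (-B)]
  have h3 : 1 - rexp (-B) ≤ 1 := by linarith [exp_pos (-B)]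
  have hA : rexp (-A) * A ≤ 1 := by
    calc rexp (-A) * A ≤ rexp (-A) * rexp A := by gcongr; linarith [add_one_le_exp A]
      _ = 1 := by rw [← Real.exp_add, neg_add_cancel, Real.exp_zero]
  calc (rexp (-A) * (1 - rexp (-B))) ^ 2 = rexp (-A) * (rexp (-A) * (1 - rexp (-B)) ^ 2) := by
        ring
    _ ≤ rexp (-A) * (rexp (-A) * (r * A)) := by gcongr; nlinarith
    _ = r * rexp (-A) * (rexp (-A) * A) := by ring
    _ ≤ r * rexp (-A) * 1 := by gcongr
    _ = r * rexp (-A) := mul_one _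

section heatCoeffIncrement

variable {t δ : ℝ}

theorem sq_heatCoeff_add_sub (n : ℤ) : (heatCoeff (t + δ) n - heatCoeff t n) ^ 2
    = (rexp (-(π ^ 2 * t * n ^ 2)) * (1 - rexp (-(π ^ 2 * δ * n ^ 2)))) ^ 2 := by
  rw [heatCoeff, heatCoeff, mul_one_sub, ← Real.exp_add]
  ring_nf

theorem sq_heatCoeff_add_sub_le_exp (hδ : 0 ≤ δ) (n : ℤ) :
    (heatCoeff (t + δ) n - heatCoeff t n) ^ 2 ≤ rexp (-(2 * π ^ 2 * t) * n ^ 2) := by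
  have h1 : 0 ≤ 1 - rexp (-(π ^ 2 * δ * n ^ 2)) :=
    sub_nonneg.mpr (exp_le_one_iff.mpr (neg_nonpos.mpr (by positivity)))
  have h2 : 1 - rexp (-(π ^ 2 * δ * n ^ 2)) ≤ 1 := by linarith [exp_pos (-(π ^ 2 * δ * n ^ 2))]
  rw [sq_heatCoeff_add_sub, mul_pow, show -(2 * π ^ 2 * t) * n ^ 2
    = -(π ^ 2 * t * n ^ 2) + -(π ^ 2 * t * n ^ 2) by ring, Real.exp_add, ← sq]
  exact mul_le_of_le_one_right (by positivity) (pow_le_one₀ h1 h2)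

theorem sq_heatCoeff_add_sub_le_div (ht : 0 < t) (hδ : 0 ≤ δ) (n : ℤ) :
    (heatCoeff (t + δ) n - heatCoeff t n) ^ 2 ≤ δ / t * rexp (-(π ^ 2 * t) * n ^ 2) := by
  rw [sq_heatCoeff_add_sub, neg_mul]
  refine sq_exp_neg_mul_one_sub_exp_neg_le (by positivity) (by positivity) (le_of_eq ?_)
  field_simp

theorem half_tsum_sq_heatCoeff_add_sub_le (ht : 0 < t) (hδ : 0 ≤ δ) :
    1 / 2 * ∑' n, (heatCoeff (t + δ) n - heatCoeff t n) ^ 2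
      ≤ √(π / (2 * t)) * min 1 (δ / (4 * t)) := by
  have hf0 : heatCoeff (t + δ) 0 - heatCoeff t 0 = 0 := by simp [heatCoeff]
  rw [mul_min_of_nonneg _ _ (sqrt_nonneg _), mul_one]
  refine le_min ?_ ?_
  · have h := tsum_le_mul_sqrt_of_le_gaussian (by positivity) (by simp [hf0])
      (fun n => sq_nonneg _) fun n => (sq_heatCoeff_add_sub_le_exp hδ n).trans_eq (one_mul _).symm
    have hsqrt : √(π / (2 * π ^ 2 * t)) ≤ √(π / (2 * t)) := by
      gcongr
      nlinarith [pi_gt_three]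
    have := sqrt_nonneg (π / (2 * π ^ 2 * t))
    linarith
  · have h := tsum_le_mul_sqrt_of_le_gaussian (by positivity) (by simp [hf0])
      (fun n => sq_nonneg _) (sq_heatCoeff_add_sub_le_div ht hδ)
    have hsqrt : 2 * √(π / (π ^ 2 * t)) ≤ √(π / (2 * t)) := by
      have h : √(2 ^ 2 * (π / (π ^ 2 * t))) ≤ √(π / (2 * t)) := by
        refine sqrt_le_sqrt ?_
        rw [← mul_div_assoc, div_le_div_iff₀ (by positivity) (by positivity)]
        have : 8 < π ^ 2 := by nlinarith [pi_gt_three]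
        nlinarith [mul_pos pi_pos ht]
      rwa [sqrt_mul (by norm_num), sqrt_sq (by norm_num)] at h
    calc 1 / 2 * ∑' n, (heatCoeff (t + δ) n - heatCoeff t n) ^ 2
        ≤ δ / (4 * t) * (2 * √(π / (π ^ 2 * t))) := by
          rw [show δ / (4 * t) * (2 * √(π / (π ^ 2 * t))) = 1 / 2 * (δ / t * √(π / (π ^ 2 * t))) by
            field_simp; ring]
          gcongr
      _ ≤ √(π / (2 * t)) * (δ / (4 * t)) := by rw [mul_comm]; gcongr

end heatCoeffIncrement

theorem heat_kernel_time_increment_L2_general (t δ : ℝ) (ht : 0 < t) (hδ : 0 < δ)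
    (x : ℝ) :
    (∫ w in (-1 : ℝ)..1, (p (t + δ) x w - p t x w) ^ 2)
      ≤ Real.sqrt (Real.pi / (2 * t)) * min 1 (δ / (4 * t)) := by
  rw [integral_sq_p_sub_p (by linarith) ht x]
  exact half_tsum_sq_heatCoeff_add_sub_le ht hδ.le

theorem heat_kernel_time_increment_L2 (t δ : ℝ) (ht : 0 < t) (hδ : 0 < δ)
    (x : ℝ) (hx : x ∈ Set.Icc (-1 : ℝ) 1) :
    (∫ w in (-1 : ℝ)..1, (p (t + δ) x w - p t x w) ^ 2)
      ≤ Real.sqrt (Real.pi / (2 * t)) * min 1 (δ / (4 * t)) :=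
  heat_kernel_time_increment_L2_general t δ ht hδ x
end

section
/- For all ε ∈ (0,1), t > 0 and δ with 0 < 2δ < t, the quantity Q := √(π/2) · t^{ε−1/2} ∫_0^1 r^{−(1−ε)} (1−r)^{−1/2} min(1, (δ/t)/(1−r)) dr satisfies Q ≤ (16/ε) · √δ / t^{1−ε}. -/
open Real intervalIntegral MeasureTheory Set

set_option maxHeartbeats 1000000 in
theorem Q_t_delta_bound (ε t δ : ℝ) (hε0 : 0 < ε) (hε1 : ε < 1)
    (hδ : 0 < δ) (ht : 2 * δ < t) :
    Real.sqrt (Real.pi / 2) * t ^ (ε - 1 / 2) *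
        ∫ r in (0 : ℝ)..1, r ^ (-(1 - ε)) * (1 - r) ^ (-(1 : ℝ) / 2) *
          min 1 ((δ / t) / (1 - r))
      ≤ (16 / ε) * Real.sqrt δ / t ^ (1 - ε) := by
  have ht0 : 0 < t := by linarith
  set s : ℝ := δ / t with hs_def
  have hs0 : 0 < s := div_pos hδ ht0
  have hs12 : s < 1 / 2 := by
    rw [hs_def, div_lt_iff₀ ht0]; linarith
  set c : ℝ := 1 - s with hc_def
  have hc12 : 1 / 2 < c := by simp only [hc_def]; linarith
  have hc1 : c < 1 := by simp only [hc_def]; linarith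
  set f : ℝ → ℝ := fun r => r ^ (-(1 - ε)) * (1 - r) ^ (-(1 : ℝ) / 2) *
      min 1 (s / (1 - r)) with hf_def
  -- measurability
  have hfm : Measurable f := by
    exact ((measurable_id.pow measurable_const).mul
        ((measurable_const.sub measurable_id).pow measurable_const)).mul
      (measurable_const.min ((measurable_const.div
        (measurable_const.sub measurable_id))))
  -- nonnegativity
  have hf0 : ∀ r ∈ Icc (0:ℝ) 1, 0 ≤ f r := by
    intro r hr
    refine mul_nonneg (mul_nonneg (rpow_nonneg hr.1 _) (rpow_nonneg (by linarith [hr.2]) _)) ?_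
    exact le_min zero_le_one (div_nonneg hs0.le (by linarith [hr.2]))
  -- dominating functions
  set g1 : ℝ → ℝ := fun r => 3 * s * r ^ (-(1 - ε)) with hg1_def
  set g2 : ℝ → ℝ := fun r => 2 * s * (1 - r) ^ (-(3:ℝ)/2) with hg2_def
  set g3 : ℝ → ℝ := fun r => 2 * (1 - r) ^ (-(1:ℝ)/2) with hg3_def
  clear_value s c f g1 g2 g3
  -- pointwise bounds
  have hb1 : ∀ r ∈ Icc (0:ℝ) (1/2), f r ≤ g1 r := by
    intro r hr
    rcases eq_or_lt_of_le hr.1 with h0 | h0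
    · rw [← h0]
      simp [hf_def, hg1_def, Real.zero_rpow (ne_of_lt (by linarith : -(1-ε) < 0)),
        Real.zero_rpow (show ε - 1 ≠ 0 by intro h; linarith)]
    have h1r : (0:ℝ) < 1 - r := by linarith [hr.2]
    have key : f r ≤ r ^ (-(1 - ε)) * ((1 - r) ^ (-(1:ℝ)/2) * (s / (1 - r))) := by
      simp only [hf_def]
      rw [mul_assoc]
      refine mul_le_mul_of_nonneg_left (mul_le_mul_of_nonneg_left (min_le_right _ _)
        (rpow_nonneg h1r.le _)) (rpow_nonneg h0.le _)
    refine key.trans ?_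
    have e1 : (1 - r) ^ (-(1:ℝ)/2) * (s / (1 - r)) = s * (1 - r) ^ (-(3:ℝ)/2) := by
      have e0 : (1 - r) ^ (-(3:ℝ)/2) = (1 - r) ^ (-(1:ℝ)/2) * (1 - r) ^ (-1:ℝ) := by
        rw [← Real.rpow_add h1r]; norm_num
      rw [e0, Real.rpow_neg_one, div_eq_mul_inv s (1 - r)]
      ring
    rw [e1]
    have e2 : (1 - r) ^ (-(3:ℝ)/2) ≤ 3 := by
      have h2 : (1 - r) ^ (-(3:ℝ)/2) ≤ ((1:ℝ)/2) ^ (-(3:ℝ)/2) :=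
        Real.rpow_le_rpow_of_nonpos (by norm_num) (by linarith [hr.2]) (by norm_num)
      refine h2.trans ?_
      have : ((1:ℝ)/2) ^ (-(3:ℝ)/2) = 2 * Real.sqrt 2 := by
        rw [show (-(3:ℝ)/2) = -(3/2 : ℝ) by norm_num, Real.rpow_neg (by norm_num), one_div,
          Real.inv_rpow (by norm_num), inv_inv,
          show (3/2 : ℝ) = 1 + 1/2 by norm_num, Real.rpow_add (by norm_num), Real.rpow_one,
          ← Real.sqrt_eq_rpow]
      rw [this]
      nlinarith [Real.sq_sqrt (by norm_num : (0:ℝ) ≤ 2), Real.sqrt_nonneg 2]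
    calc r ^ (-(1 - ε)) * (s * (1 - r) ^ (-(3:ℝ)/2))
        ≤ r ^ (-(1 - ε)) * (s * 3) := by
          refine mul_le_mul_of_nonneg_left (mul_le_mul_of_nonneg_left e2 hs0.le)
            (rpow_nonneg h0.le _)
      _ = g1 r := by rw [hg1_def]; ring
  have hr_le2 : ∀ r : ℝ, 1/2 ≤ r → r ^ (-(1 - ε)) ≤ 2 := by
    intro r hr
    have h1 : r ^ (-(1 - ε)) ≤ ((1:ℝ)/2) ^ (-(1 - ε)) :=
      Real.rpow_le_rpow_of_nonpos (by norm_num) hr (by linarith)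
    refine h1.trans ?_
    rw [one_div, Real.inv_rpow (by norm_num), ← Real.rpow_neg (by norm_num), neg_neg]
    calc (2:ℝ) ^ (1 - ε) ≤ (2:ℝ) ^ (1:ℝ) :=
          Real.rpow_le_rpow_of_exponent_le (by norm_num) (by linarith)
      _ = 2 := Real.rpow_one 2
  have hb2 : ∀ r ∈ Icc (1/2 : ℝ) c, f r ≤ g2 r := by
    intro r hr
    have h1r : (0:ℝ) < 1 - r := by
      have := hr.2; simp only [hc_def] at this; linarith
    have key : f r ≤ r ^ (-(1 - ε)) * ((1 - r) ^ (-(1:ℝ)/2) * (s / (1 - r))) := by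
      simp only [hf_def]
      rw [mul_assoc]
      refine mul_le_mul_of_nonneg_left (mul_le_mul_of_nonneg_left (min_le_right _ _)
        (rpow_nonneg h1r.le _)) (rpow_nonneg (by linarith [hr.1] : (0:ℝ) ≤ r) _)
    refine key.trans ?_
    have e1 : (1 - r) ^ (-(1:ℝ)/2) * (s / (1 - r)) = s * (1 - r) ^ (-(3:ℝ)/2) := by
      have e0 : (1 - r) ^ (-(3:ℝ)/2) = (1 - r) ^ (-(1:ℝ)/2) * (1 - r) ^ (-1:ℝ) := by
        rw [← Real.rpow_add h1r]; norm_num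
      rw [e0, Real.rpow_neg_one, div_eq_mul_inv s (1 - r)]
      ring
    rw [e1, hg2_def]
    have := hr_le2 r hr.1
    have h3 : (0:ℝ) ≤ s * (1 - r) ^ (-(3:ℝ)/2) := mul_nonneg hs0.le (rpow_nonneg h1r.le _)
    calc r ^ (-(1 - ε)) * (s * (1 - r) ^ (-(3:ℝ)/2))
        ≤ 2 * (s * (1 - r) ^ (-(3:ℝ)/2)) := mul_le_mul_of_nonneg_right this h3
      _ = 2 * s * (1 - r) ^ (-(3:ℝ)/2) := by ring
  have hb3 : ∀ r ∈ Icc c (1:ℝ), f r ≤ g3 r := by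
    intro r hr
    have h1r : (0:ℝ) ≤ 1 - r := by linarith [hr.2]
    have key : f r ≤ r ^ (-(1 - ε)) * (1 - r) ^ (-(1:ℝ)/2) := by
      simp only [hf_def]
      have h4 : min 1 (s / (1 - r)) ≤ (1:ℝ) := min_le_left _ _
      have h5 : (0:ℝ) ≤ r ^ (-(1 - ε)) * (1 - r) ^ (-(1:ℝ)/2) :=
        mul_nonneg (rpow_nonneg (by linarith [hr.1] : (0:ℝ) ≤ r) _) (rpow_nonneg h1r _)
      have := mul_le_mul_of_nonneg_left h4 h5
      simpa using this
    refine key.trans ?_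
    rw [hg3_def]
    exact mul_le_mul_of_nonneg_right (hr_le2 r (by linarith [hr.1])) (rpow_nonneg h1r _)
  -- integrability of dominating functions
  have ig1 : IntervalIntegrable g1 volume 0 (1/2) := by
    have := (intervalIntegrable_rpow' (show (-1:ℝ) < -(1-ε) by linarith)
      (a := 0) (b := 1/2)).const_mul (3 * s)
    simpa [hg1_def] using this
  have ig2 : IntervalIntegrable g2 volume (1/2) c := by
    rw [hg2_def]
    apply ContinuousOn.intervalIntegrable
    apply ContinuousOn.mul continuousOn_const
    apply ContinuousOn.rpow_const (continuousOn_const.sub continuousOn_id)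
    intro x hx
    rw [uIcc_of_le hc12.le] at hx
    left
    have : x ≤ c := hx.2
    simp only [hc_def] at this
    intro h; simp at h; nlinarith
  have ig3 : IntervalIntegrable g3 volume c 1 := by
    have h := (intervalIntegrable_rpow' (show (-1:ℝ) < -1/2 by norm_num)
      (a := s) (b := 0)).comp_sub_left 1
    simp only [sub_zero] at h
    rw [hg3_def, hc_def]
    exact (h.const_mul 2)
  -- integrability of f
  have if1 : IntervalIntegrable f volume 0 (1/2) := by
    refine ig1.mono_fun' hfm.aestronglyMeasurable ?_
    refine (MeasureTheory.ae_restrict_iff' measurableSet_uIoc).mpr (Filter.Eventually.of_forall ?_)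
    intro x hx
    rw [uIoc_of_le (by norm_num : (0:ℝ) ≤ 1/2)] at hx
    have hx' : x ∈ Icc (0:ℝ) (1/2) := ⟨hx.1.le, hx.2⟩
    show ‖f x‖ ≤ _
    rw [Real.norm_eq_abs, abs_of_nonneg (hf0 x ⟨hx'.1, by linarith [hx'.2]⟩)]
    exact hb1 x hx'
  have if2 : IntervalIntegrable f volume (1/2) c := by
    refine ig2.mono_fun' hfm.aestronglyMeasurable ?_
    refine (MeasureTheory.ae_restrict_iff' measurableSet_uIoc).mpr (Filter.Eventually.of_forall ?_)
    intro x hx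
    rw [uIoc_of_le hc12.le] at hx
    have hx' : x ∈ Icc (1/2:ℝ) c := ⟨hx.1.le, hx.2⟩
    show ‖f x‖ ≤ _
    rw [Real.norm_eq_abs, abs_of_nonneg (hf0 x ⟨by linarith [hx'.1], by linarith [hx'.2, hc1]⟩)]
    exact hb2 x hx'
  have if3 : IntervalIntegrable f volume c 1 := by
    refine ig3.mono_fun' hfm.aestronglyMeasurable ?_
    refine (MeasureTheory.ae_restrict_iff' measurableSet_uIoc).mpr (Filter.Eventually.of_forall ?_)
    intro x hx
    rw [uIoc_of_le hc1.le] at hx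
    have hx' : x ∈ Icc c (1:ℝ) := ⟨hx.1.le, hx.2⟩
    show ‖f x‖ ≤ _
    rw [Real.norm_eq_abs, abs_of_nonneg (hf0 x ⟨by linarith [hx'.1, hc12], hx'.2⟩)]
    exact hb3 x hx'
  -- integral of g1
  have hI1 : (∫ r in (0:ℝ)..(1/2), g1 r) ≤ 3 * s / ε := by
    simp only [hg1_def]
    rw [intervalIntegral.integral_const_mul, integral_rpow (Or.inl (by linarith))]
    rw [show -(1 - ε) + 1 = ε by ring, Real.zero_rpow hε0.ne', sub_zero]
    have h12 : ((1:ℝ)/2) ^ ε ≤ 1 := Real.rpow_le_one (by norm_num) (by norm_num) hε0.le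
    rw [show 3 * s * (((1:ℝ)/2) ^ ε / ε) = 3 * s * ((1:ℝ)/2) ^ ε / ε by ring]
    rw [div_le_div_iff_of_pos_right hε0]
    nlinarith [Real.rpow_nonneg (show (0:ℝ) ≤ 1/2 by norm_num) ε]
  -- sqrt facts
  have hsqrt : s * s ^ (-(1:ℝ)/2) = Real.sqrt s := by
    rw [show s * s ^ (-(1:ℝ)/2) = s ^ (1:ℝ) * s ^ (-(1:ℝ)/2) by rw [Real.rpow_one],
      ← Real.rpow_add hs0, Real.sqrt_eq_rpow]
    norm_num
  have hs_half : s ^ ((1:ℝ)/2) = Real.sqrt s := (Real.sqrt_eq_rpow s).symm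
  -- integral of g2
  have hI2 : (∫ r in (1/2:ℝ)..c, g2 r) ≤ 4 * Real.sqrt s := by
    simp only [hg2_def]
    rw [intervalIntegral.integral_const_mul]
    have hcomp : (∫ r in (1/2:ℝ)..c, (1 - r) ^ (-(3:ℝ)/2))
        = ∫ u in s..(1/2:ℝ), u ^ (-(3:ℝ)/2) := by
      have h := intervalIntegral.integral_comp_sub_left (a := (1/2:ℝ)) (b := c)
        (fun u => u ^ (-(3:ℝ)/2)) 1
      rw [h, show (1:ℝ) - c = s by simp only [hc_def]; ring]
      norm_num
    rw [hcomp, integral_rpow (Or.inr ⟨by norm_num, by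
      rw [Set.uIcc_of_le hs12.le]; rintro ⟨h1, -⟩; linarith⟩)]
    rw [show (-(3:ℝ)/2 + 1) = -(1:ℝ)/2 by norm_num,
      show (((1:ℝ)/2) ^ (-(1:ℝ)/2) - s ^ (-(1:ℝ)/2)) / (-(1:ℝ)/2)
        = 2 * s ^ (-(1:ℝ)/2) - 2 * ((1:ℝ)/2) ^ (-(1:ℝ)/2) by ring]
    have hpos : (0:ℝ) ≤ ((1:ℝ)/2) ^ (-(1:ℝ)/2) := Real.rpow_nonneg (by norm_num) _
    nlinarith [hsqrt, mul_nonneg hs0.le hpos, Real.sqrt_nonneg s]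
  -- integral of g3
  have hI3 : (∫ r in c..(1:ℝ), g3 r) ≤ 4 * Real.sqrt s := by
    simp only [hg3_def]
    rw [intervalIntegral.integral_const_mul]
    have hcomp : (∫ r in c..(1:ℝ), (1 - r) ^ (-(1:ℝ)/2))
        = ∫ u in (0:ℝ)..s, u ^ (-(1:ℝ)/2) := by
      have h := intervalIntegral.integral_comp_sub_left (a := c) (b := (1:ℝ))
        (fun u => u ^ (-(1:ℝ)/2)) 1
      rw [h, show (1:ℝ) - c = s by simp only [hc_def]; ring, sub_self]
    rw [hcomp, integral_rpow (Or.inl (by norm_num))]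
    rw [show (-(1:ℝ)/2 + 1) = (1:ℝ)/2 by norm_num, Real.zero_rpow (by norm_num : (1:ℝ)/2 ≠ 0),
      sub_zero, hs_half]
    rw [show Real.sqrt s / ((1:ℝ)/2) = 2 * Real.sqrt s by ring]
    linarith [Real.sqrt_nonneg s]
  -- split and combine
  have h12 := intervalIntegral.integral_add_adjacent_intervals if2 if3
  have h01 := intervalIntegral.integral_add_adjacent_intervals if1 (if2.trans if3)
  have hA := intervalIntegral.integral_mono_on (μ := volume) (by norm_num : (0:ℝ) ≤ 1/2)
    if1 ig1 hb1
  have hB := intervalIntegral.integral_mono_on (μ := volume) hc12.le if2 ig2 hb2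
  have hC := intervalIntegral.integral_mono_on (μ := volume) hc1.le if3 ig3 hb3
  have hsub : s ≤ (3/4) * Real.sqrt s := by
    have h1 : Real.sqrt s ≤ Real.sqrt (1/2) := Real.sqrt_le_sqrt hs12.le
    have h2 : Real.sqrt (1/2:ℝ) ≤ 3/4 := by
      rw [show (3/4:ℝ) = Real.sqrt ((3/4)^2) by rw [Real.sqrt_sq (by norm_num)]]
      exact Real.sqrt_le_sqrt (by norm_num)
    nlinarith [Real.sq_sqrt hs0.le, Real.sqrt_nonneg s]
  have hItot : (∫ r in (0:ℝ)..(1:ℝ), f r) ≤ (41/4) * Real.sqrt s / ε := by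
    have h8 : 8 * Real.sqrt s ≤ 8 * Real.sqrt s / ε := by
      rw [le_div_iff₀ hε0]; nlinarith [Real.sqrt_nonneg s]
    have h3 : 3 * s / ε ≤ (9/4) * Real.sqrt s / ε := by
      rw [div_le_div_iff_of_pos_right hε0]; linarith
    have : (∫ r in (0:ℝ)..(1:ℝ), f r) ≤ 3 * s / ε + 4 * Real.sqrt s + 4 * Real.sqrt s := by
      linarith
    refine this.trans ?_
    have : (41/4) * Real.sqrt s / ε = (9/4) * Real.sqrt s / ε + 8 * Real.sqrt s / ε := by ring
    linarith
  have hC0 : 0 ≤ Real.sqrt (Real.pi/2) * t ^ (ε - 1/2) :=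
    mul_nonneg (Real.sqrt_nonneg _) (Real.rpow_nonneg ht0.le _)
  have hpi : Real.sqrt (Real.pi/2) ≤ 3/2 := by
    rw [show (3/2:ℝ) = Real.sqrt ((3/2)^2) by rw [Real.sqrt_sq (by norm_num)]]
    exact Real.sqrt_le_sqrt (by nlinarith [Real.pi_le_four])
  have hts : t ^ (ε - 1/2) * Real.sqrt s = Real.sqrt δ * t ^ (ε - 1) := by
    rw [hs_def, Real.sqrt_div hδ.le, Real.sqrt_eq_rpow t,
      div_eq_mul_inv (Real.sqrt δ) (t ^ ((1:ℝ)/2)), ← Real.rpow_neg ht0.le]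
    rw [show t ^ (ε - 1/2) * (Real.sqrt δ * t ^ (-(1/2:ℝ)))
        = Real.sqrt δ * (t ^ (ε - 1/2) * t ^ (-(1/2:ℝ))) by ring,
      ← Real.rpow_add ht0, show ε - 1/2 + -(1/2:ℝ) = ε - 1 by ring]
  calc Real.sqrt (Real.pi/2) * t ^ (ε - 1/2) * (∫ r in (0:ℝ)..(1:ℝ), f r)
      ≤ Real.sqrt (Real.pi/2) * t ^ (ε - 1/2) * ((41/4) * Real.sqrt s / ε) :=
        mul_le_mul_of_nonneg_left hItot hC0
    _ = (Real.sqrt (Real.pi/2) * (41/4) / ε) * (t ^ (ε - 1/2) * Real.sqrt s) := by ring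
    _ = (Real.sqrt (Real.pi/2) * (41/4) / ε) * (Real.sqrt δ * t ^ (ε - 1)) := by rw [hts]
    _ ≤ (16/ε) * (Real.sqrt δ * t ^ (ε - 1)) := by
        refine mul_le_mul_of_nonneg_right ?_
          (mul_nonneg (Real.sqrt_nonneg _) (Real.rpow_nonneg ht0.le _))
        rw [div_le_div_iff_of_pos_right hε0]
        nlinarith [hpi, Real.sqrt_nonneg (Real.pi/2)]
    _ = (16/ε) * Real.sqrt δ / t ^ (1 - ε) := by
        rw [show (ε - 1 : ℝ) = -(1 - ε) by ring, Real.rpow_neg ht0.le, div_eq_mul_inv]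
        ring
end
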